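/- Sufficient condition for discrete-time energy decrease of the damping half-step: Let n be a natural number and let μ > 0, L ≥ 0, h > 0 be real numbers. Let M be a real n×n symmetric invertible matrix with ⟨x, M·x⟩ ≥ μ·‖x‖² for all x ∈ ℝ^n, and let D be a real n×n symmetric positive semidefinite matrix with ⟨x, D·x⟩ ≤ L·‖x‖² for all x ∈ ℝ^n. Assume h·L/μ ≤ 2. Let V : ℝ^n → ℝ and define H(q, p) = V(q) + (1/2)·⟨p, M⁻¹·p⟩. Then for every q, p ∈ ℝ^n, setting v = M⁻¹·p and p⁺ = p - h·D·v, one has H(q, p⁺) ≤ H(q, p). -/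
import Mathlib


open Matrix

private lemma dotSelfNonneg {n : ℕ} (x : Fin n → ℝ) : 0 ≤ x ⬝ᵥ x :=
  Finset.sum_nonneg fun i _ => mul_self_nonneg _

/-- Symmetric matrices give symmetric bilinear forms. -/
private lemma symmDot {n : ℕ} (A : Matrix (Fin n) (Fin n) ℝ) (hA : Aᵀ = A)
    (a b : Fin n → ℝ) : a ⬝ᵥ A.mulVec b = b ⬝ᵥ A.mulVec a := by
  rw [Matrix.dotProduct_mulVec, ← Matrix.mulVec_transpose, hA, dotProduct_comm]

/-- Cauchy–Schwarz for a symmetric PSD quadratic form. -/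
private lemma csPSD {n : ℕ} (A : Matrix (Fin n) (Fin n) ℝ) (hA : Aᵀ = A)
    (hpsd : ∀ x : Fin n → ℝ, 0 ≤ x ⬝ᵥ A.mulVec x) (a b : Fin n → ℝ) :
    (a ⬝ᵥ A.mulVec b) ^ 2 ≤ (a ⬝ᵥ A.mulVec a) * (b ⬝ᵥ A.mulVec b) := by
  have key : discrim (b ⬝ᵥ A.mulVec b) (2 * (a ⬝ᵥ A.mulVec b)) (a ⬝ᵥ A.mulVec a) ≤ 0 := by
    apply discrim_le_zero
    intro t
    have h0 := hpsd (a + t • b)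
    have hexp : (a + t • b) ⬝ᵥ A.mulVec (a + t • b)
        = (b ⬝ᵥ A.mulVec b) * (t * t) + 2 * (a ⬝ᵥ A.mulVec b) * t + (a ⬝ᵥ A.mulVec a) := by
      rw [Matrix.mulVec_add, Matrix.mulVec_smul]
      simp only [add_dotProduct, dotProduct_add, smul_dotProduct,
        dotProduct_smul, smul_eq_mul]
      rw [symmDot A hA b a]
      ring
    linarith [hexp ▸ h0]
  rw [discrim] at key
  nlinarith [key]

/-- **Sufficient condition for discrete-time energy decrease of the damping half-step.**
If `⟨x, Mx⟩ ≥ μ‖x‖²`, `D` is symmetric PSD with `⟨x, Dx⟩ ≤ L‖x‖²`, and `h·L/μ ≤ 2`,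
then with `H(q,p) = V(q) + (1/2)⟨p, M⁻¹p⟩`, `v = M⁻¹p`, `p⁺ = p - h·D·v`,
one has `H(q, p⁺) ≤ H(q, p)`. -/
theorem damping_half_step_energy_decrease
    (n : ℕ) (μ L h : ℝ) (hμ : 0 < μ) (hL : 0 ≤ L) (hh : 0 < h)
    (M : Matrix (Fin n) (Fin n) ℝ) (hMsymm : Mᵀ = M) (hMinv : IsUnit M)
    (hMlb : ∀ x : Fin n → ℝ, μ * (x ⬝ᵥ x) ≤ x ⬝ᵥ M.mulVec x)
    (D : Matrix (Fin n) (Fin n) ℝ) (hDsymm : Dᵀ = D)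
    (hDpsd : ∀ x : Fin n → ℝ, 0 ≤ x ⬝ᵥ D.mulVec x)
    (hDub : ∀ x : Fin n → ℝ, x ⬝ᵥ D.mulVec x ≤ L * (x ⬝ᵥ x))
    (hstep : h * L / μ ≤ 2)
    (V : (Fin n → ℝ) → ℝ) :
    ∀ q p : Fin n → ℝ,
      V q + (1 / 2) * ((p - h • D.mulVec (M⁻¹.mulVec p)) ⬝ᵥ
          M⁻¹.mulVec (p - h • D.mulVec (M⁻¹.mulVec p)))
        ≤ V q + (1 / 2) * (p ⬝ᵥ M⁻¹.mulVec p) := by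
  intro q p
  have hMdet : IsUnit M.det := (Matrix.isUnit_iff_isUnit_det M).1 hMinv
  have hMIsymm : (M⁻¹)ᵀ = M⁻¹ := by
    rw [Matrix.transpose_nonsing_inv, hMsymm]
  set v : Fin n → ℝ := M⁻¹.mulVec p with hv
  set w : Fin n → ℝ := D.mulVec v with hw
  have hMv : M.mulVec v = p := by
    rw [hv, Matrix.mulVec_mulVec, Matrix.mul_nonsing_inv M hMdet, Matrix.one_mulVec]
  -- CS for the plain dot product
  have csId : ∀ a b : Fin n → ℝ, (a ⬝ᵥ b) ^ 2 ≤ (a ⬝ᵥ a) * (b ⬝ᵥ b) := by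
    intro a b
    have := csPSD (1 : Matrix (Fin n) (Fin n) ℝ) (Matrix.transpose_one)
      (fun x => by simpa [Matrix.one_mulVec] using dotSelfNonneg x) a b
    simpa [Matrix.one_mulVec] using this
  -- M⁻¹ upper bound: y ⬝ M⁻¹ y ≤ (y⬝y)/μ
  have hMIub : ∀ y : Fin n → ℝ, y ⬝ᵥ M⁻¹.mulVec y ≤ (y ⬝ᵥ y) / μ := by
    intro y
    set x : Fin n → ℝ := M⁻¹.mulVec y with hx
    have hMx : M.mulVec x = y := by
      rw [hx, Matrix.mulVec_mulVec, Matrix.mul_nonsing_inv M hMdet, Matrix.one_mulVec]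
    have ht : y ⬝ᵥ M⁻¹.mulVec y = x ⬝ᵥ y := by
      rw [← hx, dotProduct_comm]
    have h1 : μ * (x ⬝ᵥ x) ≤ x ⬝ᵥ y := by
      have := hMlb x; rwa [hMx] at this
    have h2 : (x ⬝ᵥ y) ^ 2 ≤ (x ⬝ᵥ x) * (y ⬝ᵥ y) := csId x y
    have hxx : 0 ≤ x ⬝ᵥ x := dotSelfNonneg x
    have hyy : 0 ≤ y ⬝ᵥ y := dotSelfNonneg y
    have ht0 : 0 ≤ x ⬝ᵥ y := le_trans (by positivity) h1
    rw [ht, le_div_iff₀ hμ]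
    rcases eq_or_lt_of_le ht0 with h0 | h0
    · rw [← h0]; simpa using hyy
    · nlinarith [h1, h2, h0, hxx, hyy]
  -- D bound : w⬝w ≤ L * (v ⬝ D v)
  have hww : w ⬝ᵥ w ≤ L * (v ⬝ᵥ D.mulVec v) := by
    have hcs := csPSD D hDsymm hDpsd v w
    have hvw : v ⬝ᵥ D.mulVec w = w ⬝ᵥ w := by
      rw [symmDot D hDsymm v w, ← hw]
    rw [hvw] at hcs
    have hwD : w ⬝ᵥ D.mulVec w ≤ L * (w ⬝ᵥ w) := hDub w
    have hs : 0 ≤ w ⬝ᵥ w := dotSelfNonneg w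
    have hd : 0 ≤ v ⬝ᵥ D.mulVec v := hDpsd v
    rcases eq_or_lt_of_le hs with h0 | h0
    · rw [← h0]; exact mul_nonneg hL hd
    · nlinarith [hcs, mul_le_mul_of_nonneg_left hwD hd, h0]
  -- expansion
  have hexp : (p - h • w) ⬝ᵥ M⁻¹.mulVec (p - h • w)
      = p ⬝ᵥ v - 2 * h * (v ⬝ᵥ w) + h ^ 2 * (w ⬝ᵥ M⁻¹.mulVec w) := by
    rw [Matrix.mulVec_sub, Matrix.mulVec_smul, ← hv]
    simp only [sub_dotProduct, dotProduct_sub, smul_dotProduct,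
      dotProduct_smul, smul_eq_mul]
    have h1 : p ⬝ᵥ M⁻¹.mulVec w = v ⬝ᵥ w := by
      rw [symmDot M⁻¹ hMIsymm p w, ← hv, dotProduct_comm]
    have h2 : w ⬝ᵥ v = v ⬝ᵥ w := dotProduct_comm w v
    rw [h1, h2]
    ring
  have hvw' : v ⬝ᵥ w = v ⬝ᵥ D.mulVec v := by rw [hw]
  have hkey : h ^ 2 * (w ⬝ᵥ M⁻¹.mulVec w) ≤ 2 * h * (v ⬝ᵥ w) := by
    have h1 : w ⬝ᵥ M⁻¹.mulVec w ≤ (w ⬝ᵥ w) / μ := hMIub w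
    have hd : 0 ≤ v ⬝ᵥ D.mulVec v := hDpsd v
    have hstep' : h * L ≤ 2 * μ := by
      rw [div_le_iff₀ hμ] at hstep; linarith
    rw [hvw']
    have h2 : h ^ 2 * (w ⬝ᵥ M⁻¹.mulVec w) ≤ h ^ 2 * ((w ⬝ᵥ w) / μ) := by
      apply mul_le_mul_of_nonneg_left h1 (by positivity)
    have h3 : h ^ 2 * ((w ⬝ᵥ w) / μ) ≤ h ^ 2 * ((L * (v ⬝ᵥ D.mulVec v)) / μ) := by
      gcongr
    have h4 : h ^ 2 * ((L * (v ⬝ᵥ D.mulVec v)) / μ) ≤ 2 * h * (v ⬝ᵥ D.mulVec v) := by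
      rw [div_eq_inv_mul, ← sub_nonneg]
      have : 2 * h * (v ⬝ᵥ D.mulVec v) - h ^ 2 * (μ⁻¹ * (L * (v ⬝ᵥ D.mulVec v)))
          = h * μ⁻¹ * (v ⬝ᵥ D.mulVec v) * (2 * μ - h * L) := by
        field_simp
      rw [this]
      have : 0 ≤ 2 * μ - h * L := by linarith
      positivity
    linarith
  rw [hexp]
  linarith
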